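/- Let G = (V,E) be a connected finite simple graph with n = |V|, let 𝒢 be the graph obtained from G by the subdivision-path-apex construction, and let c be a natural number. Then G contains an independent set of cardinality at least c if and only if 𝒢 contains a proper skew stalled subset of cardinality at least (2n+1)·|E| + c. -/

import Mathlib

def IsForced {W : Type*} (H : SimpleGraph W) (F : Set W) (v : W) : Prop :=
  v ∉ F ∧ ∃ u, u ∈ F ∧ H.Adj u v ∧ ∀ w, H.Adj u w → w ∉ F → w = v

def IsSkewForced {W : Type*} (H : SimpleGraph W) (F : Set W) (v : W) : Prop :=
  v ∉ F ∧ ∃ u, H.Adj u v ∧ ∀ w, H.Adj u w → w ∉ F → w = v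

def Stalled {W : Type*} (H : SimpleGraph W) (F : Set W) : Prop :=
  ∀ v, ¬ IsForced H F v

def SkewStalled {W : Type*} (H : SimpleGraph W) (F : Set W) : Prop :=
  ∀ v, ¬ IsSkewForced H F v

def IndepIn {W : Type*} (H : SimpleGraph W) (U : Set W) : Prop :=
  U.Pairwise fun a b => ¬ H.Adj a b

/-- Vertex set of the subdivision-path-apex construction: the vertices of `G`,
vertices `e^i` for each edge `e` and `0 ≤ i ≤ 2n`, and one apex vertex `ε`. -/
abbrev GVert {V : Type*} [Fintype V] (G : SimpleGraph V) : Type _ :=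
  V ⊕ (G.edgeSet × Fin (2 * Fintype.card V + 1)) ⊕ Unit

/-- Generating relation: `v ~ e^0` when `v ∈ e`; `e^i ~ e^{i+1}`; `ε ~ e^0`. -/
def gRel {V : Type*} [Fintype V] (G : SimpleGraph V) : GVert G → GVert G → Prop
  | Sum.inl v, Sum.inr (Sum.inl (e, i)) => i.val = 0 ∧ v ∈ (e : Sym2 V)
  | Sum.inr (Sum.inl (e, i)), Sum.inr (Sum.inl (e', j)) => e = e' ∧ i.val + 1 = j.val
  | Sum.inr (Sum.inr _), Sum.inr (Sum.inl (_, i)) => i.val = 0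
  | _, _ => False

/-- The subdivision-path-apex construction `𝒢`. -/
def GG {V : Type*} [Fintype V] (G : SimpleGraph V) : SimpleGraph (GVert G) :=
  SimpleGraph.fromRel (gRel G)

/-!
Along each path `e^0 … e^{2n}` a skew stalled set `S` contains `e^{2n-1}`, the only neighbour
of the leaf `e^{2n}`, and every interior vertex forces its two neighbours to agree. So `S`
contains all odd-indexed path vertices, and the even-indexed ones are all in `S` or all out;
in the latter case `S` misses `n + 1` vertices, which the cardinality bound forbids. With the
paths filled, the only possibly empty neighbours of `e^0` are `ε` and the ends of `e`. If `ε` is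
empty, the filled vertices of `G` are therefore independent. If `ε` is filled, emptiness spreads
along the edges of `G`, so by connectivity `S` misses all of `V` and the bound forces `c ≤ 1`.
Conversely, an independent set together with all path vertices is skew stalled.
-/

theorem skewStalled_iff {W : Type*} {H : SimpleGraph W} {S : Set W} :
    SkewStalled H S ↔ ∀ ⦃u v⦄, H.Adj u v → v ∉ S → ∃ w, H.Adj u w ∧ w ∉ S ∧ w ≠ v := by
  simp only [SkewStalled, IsSkewForced]
  grind

namespace SkewStalled

variable {W : Type*} {H : SimpleGraph W} {S : Set W}

theorem mem_of_forall_adj_eq (hS : SkewStalled H S) {u v : W} (huv : H.Adj u v)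
    (h : ∀ w, H.Adj u w → w = v) : v ∈ S :=
  by_contra fun hv => hS v ⟨hv, u, huv, fun w hw _ => h w hw⟩

theorem mem_iff_mem_of_forall_adj (hS : SkewStalled H S) {u a b : W} (ha : H.Adj u a)
    (hb : H.Adj u b) (h : ∀ w, H.Adj u w → w = a ∨ w = b) : a ∈ S ↔ b ∈ S := by
  have key : ∀ {x y}, H.Adj u x → H.Adj u y → (∀ w, H.Adj u w → w = x ∨ w = y) →
      x ∈ S → y ∈ S := fun {x y} hx hy hxy hxS => by_contra fun hyS =>
    hS y ⟨hyS, u, hy, fun w hw hwS => (hxy w hw).resolve_left (by rintro rfl; exact hwS hxS)⟩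
  exact ⟨key ha hb h, key hb ha fun w hw => (h w hw).symm⟩

end SkewStalled

theorem SimpleGraph.Preconnected.induction_on_adj {V : Type*} {G : SimpleGraph V}
    (hG : G.Preconnected) {p : V → Prop} (h : ∀ ⦃a b⦄, G.Adj a b → p a → p b) {a : V}
    (ha : p a) (b : V) : p b := by
  obtain ⟨w⟩ := hG a b
  induction w with
  | nil => exact ha
  | cons hab _ ih => exact ih (h hab ha)

theorem Fin.iff_of_mod_two_eq {N : ℕ} {P : Fin N → Prop}
    (h : ∀ i j : Fin N, i.val + 2 = j.val → (P i ↔ P j)) {i j : Fin N}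
    (hij : i.val % 2 = j.val % 2) : P i ↔ P j := by
  wlog hle : i ≤ j generalizing i j
  · exact (this hij.symm (le_of_not_ge hle)).symm
  obtain ⟨d, hd⟩ : ∃ d, j.val = i.val + 2 * d := ⟨(j.val - i.val) / 2, by omega⟩
  induction d generalizing j with
  | zero => rw [Fin.ext (by omega : j.val = i.val)]
  | succ d ih =>
    have hk : i.val + 2 * d < N := by omega
    exact (ih (j := ⟨_, hk⟩) (by dsimp only; omega) (by rw [Fin.le_def]; dsimp only; omega)
      rfl).trans (h _ j (by dsimp only; omega))

namespace GG

variable {V : Type*} [Fintype V] {G : SimpleGraph V}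

abbrev pathVert (G : SimpleGraph V) (e : G.edgeSet) (i : Fin (2 * Fintype.card V + 1)) :
    GVert G :=
  Sum.inr (Sum.inl (e, i))

abbrev apex (G : SimpleGraph V) : GVert G := Sum.inr (Sum.inr ())

theorem adj_pathVert_iff {e : G.edgeSet} {i : Fin _} {w : GVert G} :
    (GG G).Adj (pathVert G e i) w ↔
      (∃ j, (i.val + 1 = j.val ∨ j.val + 1 = i.val) ∧ w = pathVert G e j) ∨
      (i = 0 ∧ (w = apex G ∨ ∃ v ∈ (e : Sym2 V), w = Sum.inl v)) := by
  rcases w with v | ⟨e', j⟩ | ⟨⟩ <;> simp [GG, gRel]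
  grind

theorem adj_inl_iff {v : V} {w : GVert G} :
    (GG G).Adj (Sum.inl v) w ↔ ∃ e : G.edgeSet, v ∈ (e : Sym2 V) ∧ w = pathVert G e 0 := by
  rcases w with v | ⟨e', j⟩ | ⟨⟩ <;> simp [GG, gRel]
  grind

theorem adj_apex_iff {w : GVert G} :
    (GG G).Adj (apex G) w ↔ ∃ e : G.edgeSet, w = pathVert G e 0 := by
  rcases w with v | ⟨e', j⟩ | ⟨⟩ <;> simp [GG, gRel]

def pathVerts (G : SimpleGraph V) : Set (GVert G) :=
  Set.range (Sum.inr ∘ Sum.inl : G.edgeSet × Fin (2 * Fintype.card V + 1) → GVert G)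

theorem ncard_pathVerts :
    (pathVerts G).ncard = (2 * Fintype.card V + 1) * G.edgeSet.ncard := by
  rw [pathVerts, Set.ncard_range_of_injective (Sum.inr_injective.comp Sum.inl_injective),
    Nat.card_prod, Nat.card_coe_set_eq, Nat.card_eq_fintype_card, Fintype.card_fin, mul_comm]

theorem card_gVert :
    Nat.card (GVert G) = Fintype.card V + (2 * Fintype.card V + 1) * G.edgeSet.ncard + 1 := by
  rw [Nat.card_sum, Nat.card_sum, Nat.card_prod, Nat.card_eq_fintype_card (α := V),
    Nat.card_eq_fintype_card (α := Fin _), Fintype.card_fin, Nat.card_coe_set_eq,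
    Nat.card_unique, mul_comm, add_assoc]

section Paths

variable {S : Set (GVert G)}

theorem pathVert_mem_iff_of_add_two (hS : SkewStalled (GG G) S) (e : G.edgeSet)
    {i j : Fin _} (hij : i.val + 2 = j.val) : pathVert G e i ∈ S ↔ pathVert G e j ∈ S := by
  let m : Fin (2 * Fintype.card V + 1) := ⟨i.val + 1, by omega⟩
  refine hS.mem_iff_mem_of_forall_adj (u := pathVert G e m) ?_ ?_ fun w hw => ?_
  · exact adj_pathVert_iff.mpr (Or.inl ⟨i, Or.inr rfl, rfl⟩)
  · exact adj_pathVert_iff.mpr (Or.inl ⟨j, Or.inl hij, rfl⟩)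
  · obtain ⟨k, hk, rfl⟩ | ⟨hm, -⟩ := adj_pathVert_iff.mp hw
    · rcases hk with hk | hk
      · exact Or.inr (congrArg _ (Fin.ext (by simp [m] at hk; omega)))
      · exact Or.inl (congrArg _ (Fin.ext (by simp [m] at hk; omega)))
    · exact absurd (congrArg Fin.val hm) (by simp [m])

theorem pathVert_penultimate_mem (hS : SkewStalled (GG G) S) (e : G.edgeSet) {i : Fin _}
    (hi : i.val + 1 = 2 * Fintype.card V) : pathVert G e i ∈ S := by
  refine hS.mem_of_forall_adj_eq (u := pathVert G e (Fin.last _))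
    (adj_pathVert_iff.mpr (Or.inl ⟨i, Or.inr hi, rfl⟩)) fun w hw => ?_
  obtain ⟨k, hk, rfl⟩ | ⟨hlast, -⟩ := adj_pathVert_iff.mp hw
  · exact congrArg _ (Fin.ext (by simp at hk; omega))
  · exact absurd (congrArg Fin.val hlast) (by simp; omega)

theorem pathVert_mem_of_odd (hS : SkewStalled (GG G) S) (e : G.edgeSet) {i : Fin _}
    (hi : Odd i.val) : pathVert G e i ∈ S := by
  obtain ⟨k, hk⟩ := hi
  have hlast := pathVert_penultimate_mem hS e (i := ⟨2 * Fintype.card V - 1, by omega⟩)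
    (by dsimp only; omega)
  exact (Fin.iff_of_mod_two_eq (fun _ _ => pathVert_mem_iff_of_add_two hS e)
    (by dsimp only; omega)).mpr hlast

theorem pathVert_mem_iff_zero_of_even (hS : SkewStalled (GG G) S) (e : G.edgeSet) {i : Fin _}
    (hi : Even i.val) : pathVert G e i ∈ S ↔ pathVert G e 0 ∈ S :=
  Fin.iff_of_mod_two_eq (fun _ _ => pathVert_mem_iff_of_add_two hS e)
    (by rw [Fin.val_zero]; exact Nat.even_iff.mp hi)

theorem pathVert_zero_mem (hS : SkewStalled (GG G) S) (hSc : Sᶜ.ncard ≤ Fintype.card V)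
    (e : G.edgeSet) : pathVert G e 0 ∈ S := by
  by_contra h0
  let even : Fin (Fintype.card V + 1) → GVert G := fun k => pathVert G e ⟨2 * k, by omega⟩
  have heven : Function.Injective even := fun k l hkl => by
    simp only [even, Sum.inr.injEq, Sum.inl.injEq, Prod.mk.injEq, Fin.mk.injEq] at hkl
    exact Fin.ext (by omega)
  have hsub : Set.range even ⊆ Sᶜ := by
    rintro _ ⟨k, rfl⟩ hk
    exact h0 ((pathVert_mem_iff_zero_of_even hS e (even_two_mul _)).mp hk)
  have := Set.ncard_le_ncard hsub
  rw [Set.ncard_range_of_injective heven, Nat.card_eq_fintype_card, Fintype.card_fin] at this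
  omega

theorem pathVerts_subset (hS : SkewStalled (GG G) S)
    (hcard : (2 * Fintype.card V + 1) * G.edgeSet.ncard < S.ncard) : pathVerts G ⊆ S := by
  have hSc : Sᶜ.ncard ≤ Fintype.card V := by
    have := Set.ncard_add_ncard_compl S
    rw [card_gVert] at this
    omega
  rintro _ ⟨⟨e, i⟩, rfl⟩
  rcases Nat.even_or_odd i.val with hi | hi
  · exact (pathVert_mem_iff_zero_of_even hS e hi).mpr (pathVert_zero_mem hS hSc e)
  · exact pathVert_mem_of_odd hS e hi

theorem exists_ne_notMem_of_adj_pathVert_zero (hS : SkewStalled (GG G) S)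
    (hpath : pathVerts G ⊆ S) {a b : V} (hab : G.Adj a b) {x : GVert G}
    (hx : (GG G).Adj (pathVert G ⟨s(a, b), hab⟩ 0) x) (hxS : x ∉ S) :
    ∃ w ∈ ({Sum.inl a, Sum.inl b, apex G} : Set (GVert G)), w ∉ S ∧ w ≠ x := by
  obtain ⟨w, hw, hwS, hwx⟩ := skewStalled_iff.mp hS hx hxS
  refine ⟨w, ?_, hwS, hwx⟩
  obtain ⟨j, -, rfl⟩ | ⟨-, rfl | ⟨v, hv, rfl⟩⟩ := adj_pathVert_iff.mp hw
  · exact absurd (hpath ⟨(_, j), rfl⟩) hwS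
  · simp
  · rcases Sym2.mem_iff.mp hv with rfl | rfl <;> simp

theorem indepIn_preimage_inl (hS : SkewStalled (GG G) S) (hpath : pathVerts G ⊆ S)
    (hapex : apex G ∉ S) : IndepIn G (Sum.inl ⁻¹' S) := by
  intro a ha b hb _ hab
  obtain ⟨w, hw, hwS, hwx⟩ := exists_ne_notMem_of_adj_pathVert_zero hS hpath hab
    (adj_pathVert_iff.mpr (Or.inr ⟨rfl, Or.inl rfl⟩)) hapex
  rcases hw with rfl | rfl | rfl
  exacts [hwS ha, hwS hb, hwx rfl]

theorem inl_notMem_of_adj (hS : SkewStalled (GG G) S) (hpath : pathVerts G ⊆ S)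
    (hapex : apex G ∈ S) {a b : V} (hab : G.Adj a b) (ha : Sum.inl a ∉ S) : Sum.inl b ∉ S := by
  obtain ⟨w, hw, hwS, hwx⟩ := exists_ne_notMem_of_adj_pathVert_zero hS hpath hab
    (adj_pathVert_iff.mpr (Or.inr ⟨rfl, Or.inr ⟨a, Sym2.mem_mk_left a b, rfl⟩⟩)) ha
  rcases hw with rfl | rfl | rfl
  exacts [absurd rfl hwx, hwS, absurd hapex hwS]

theorem ncard_le_of_apex_mem (hG : G.Preconnected) (hS : SkewStalled (GG G) S)
    (hpath : pathVerts G ⊆ S) (hapex : apex G ∈ S) (hne : S ≠ Set.univ) :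
    S.ncard ≤ (2 * Fintype.card V + 1) * G.edgeSet.ncard + 1 := by
  obtain ⟨x, hx⟩ := (Set.ne_univ_iff_exists_notMem S).mp hne
  obtain ⟨v, rfl⟩ : ∃ v, x = Sum.inl v := by
    rcases x with v | p | ⟨⟩
    exacts [⟨v, rfl⟩, absurd (hpath ⟨p, rfl⟩) hx, absurd hapex hx]
  have hinl : ∀ w, Sum.inl w ∉ S :=
    hG.induction_on_adj (fun a b hab => inl_notMem_of_adj hS hpath hapex hab) hx
  have hsub : S ⊆ insert (apex G) (pathVerts G) := by
    rintro (w | p | ⟨⟩) hw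
    exacts [absurd hw (hinl w), Or.inr ⟨p, rfl⟩, Or.inl rfl]
  calc S.ncard ≤ (insert (apex G) (pathVerts G)).ncard := Set.ncard_le_ncard hsub
    _ ≤ (pathVerts G).ncard + 1 := Set.ncard_insert_le _ _
    _ = _ := by rw [ncard_pathVerts]

end Paths

def withPaths (G : SimpleGraph V) (U : Set V) : Set (GVert G) := Sum.inl '' U ∪ pathVerts G

@[simp]
theorem inl_mem_withPaths {U : Set V} {v : V} : Sum.inl v ∈ withPaths G U ↔ v ∈ U := by
  simp [withPaths, pathVerts]

@[simp]
theorem apex_notMem_withPaths {U : Set V} : apex G ∉ withPaths G U := by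
  simp [withPaths, pathVerts]

theorem ncard_withPaths (U : Set V) :
    (withPaths G U).ncard = (2 * Fintype.card V + 1) * G.edgeSet.ncard + U.ncard := by
  have hdisj : Disjoint (Sum.inl '' U) (pathVerts G) := by
    rw [Set.disjoint_left]
    rintro _ ⟨v, -, rfl⟩ ⟨p, hp⟩
    cases hp
  rw [withPaths, Set.ncard_union_eq hdisj, Set.ncard_image_of_injective _ Sum.inl_injective,
    ncard_pathVerts, add_comm]

theorem withPaths_preimage_inl {S : Set (GVert G)} (hpath : pathVerts G ⊆ S)
    (hapex : apex G ∉ S) : withPaths G (Sum.inl ⁻¹' S) = S := by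
  ext x
  rcases x with v | p | ⟨⟩
  · simp
  · exact ⟨fun _ => hpath ⟨p, rfl⟩, fun _ => Or.inr ⟨p, rfl⟩⟩
  · exact iff_of_false apex_notMem_withPaths hapex

theorem skewStalled_withPaths {U : Set V} (hU : IndepIn G U) :
    SkewStalled (GG G) (withPaths G U) := by
  refine skewStalled_iff.mpr fun u v huv hv => ?_
  rcases v with x | p | ⟨⟩
  · obtain ⟨e, -, rfl⟩ := adj_inl_iff.mp huv.symm
    exact ⟨apex G, adj_pathVert_iff.mpr (Or.inr ⟨rfl, Or.inl rfl⟩), by simp, by simp⟩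
  · exact absurd (Or.inr ⟨p, rfl⟩) hv
  · obtain ⟨⟨e, he⟩, rfl⟩ := adj_apex_iff.mp huv.symm
    induction e using Sym2.ind with | _ a b => ?_
    have hab : G.Adj a b := he
    obtain ⟨c, hc, hcU⟩ : ∃ c ∈ s(a, b), c ∉ U := by
      by_contra! h
      exact hU (h a (Sym2.mem_mk_left a b)) (h b (Sym2.mem_mk_right a b)) hab.ne hab
    exact ⟨Sum.inl c, adj_pathVert_iff.mpr (Or.inr ⟨rfl, Or.inr ⟨c, hc, rfl⟩⟩), by simpa, by simp⟩

end GG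

open GG in
/-- `G` has an independent set of cardinality at least `c` iff `𝒢` has a
proper skew stalled subset of cardinality at least `(2n+1)·|E| + c`. -/
theorem indep_iff_proper_skewStalled {V : Type*} [Fintype V] (G : SimpleGraph V)
    (hG : G.Connected) (c : ℕ) :
    (∃ U : Set V, IndepIn G U ∧ c ≤ U.ncard) ↔
      ∃ S : Set (GVert G), S ≠ Set.univ ∧ SkewStalled (GG G) S ∧
        (2 * Fintype.card V + 1) * G.edgeSet.ncard + c ≤ S.ncard := by
  constructor
  · rintro ⟨U, hU, hc⟩
    refine ⟨withPaths G U, fun h => apex_notMem_withPaths (h ▸ Set.mem_univ _),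
      skewStalled_withPaths hU, ?_⟩
    rw [ncard_withPaths]
    omega
  · rintro ⟨S, hne, hS, hcard⟩
    obtain rfl | hc := Nat.eq_zero_or_pos c
    · exact ⟨∅, Set.pairwise_empty _, Nat.zero_le _⟩
    have hpath := pathVerts_subset hS (by omega)
    by_cases hapex : apex G ∈ S
    · obtain ⟨v⟩ := hG.nonempty
      have := ncard_le_of_apex_mem hG.preconnected hS hpath hapex hne
      exact ⟨{v}, Set.pairwise_singleton _ _, by rw [Set.ncard_singleton]; omega⟩
    · refine ⟨Sum.inl ⁻¹' S, indepIn_preimage_inl hS hpath hapex, ?_⟩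
      rw [← withPaths_preimage_inl hpath hapex, ncard_withPaths] at hcard
      omega
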